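/- (Theorem 2, Backward Regression single-step guarantee.) Let Φ be a real n×m matrix with full column rank and let σ > 0 satisfy σ‖v‖₂ ≤ ‖Φv‖₂ for all v ∈ ℝ^m. Suppose y = Φx + ε where x has support S = supp(x), and assume (σ/2)·min_{i∈S}|x_i| > ‖ε‖₂. Then for every index set A with S ⊆ A ⊆ {1,…,m}, every i ∈ S and every j ∈ A \ S: (min over z with supp(z) ⊆ A \ {j} of ‖y − Φz‖₂) < (min over z with supp(z) ⊆ A \ {i} of ‖y − Φz‖₂). Consequently the atom whose deletion least increases the residual always lies outside S while A strictly contains S, so Backward Regression recovers S in m − |S| steps. -/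

import Mathlib

/-!
If the active set keeps all of `S = supp x`, the true coefficients `x` are an admissible fit,
so the residual is at most `‖ε‖₂`. If it drops some `i ∈ S`, every admissible `z` has
`z i = 0`, so `‖Φ(x - z)‖₂ ≥ σ‖x - z‖₂ ≥ σ|x i|` and the residual is at least
`σ|x i| - ‖ε‖₂`, which exceeds `‖ε‖₂` by the noise assumption.
-/

open Matrix

/-- The Euclidean (ℓ₂) norm of a finitely indexed real vector. -/
noncomputable def enorm2 {ι : Type*} [Fintype ι] (v : ι → ℝ) : ℝ :=
  ‖(WithLp.equiv 2 (ι → ℝ)).symm v‖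

/-- The restricted least-squares residual norm: the infimum of `‖y − Φz‖₂` over
vectors `z` supported inside the index set `B`. -/
noncomputable def resNorm {n m : ℕ} (Φ : Matrix (Fin n) (Fin m) ℝ)
    (y : Fin n → ℝ) (B : Finset (Fin m)) : ℝ :=
  sInf {c : ℝ | ∃ z : Fin m → ℝ, (∀ l, z l ≠ 0 → l ∈ B) ∧ c = enorm2 (y - Φ.mulVec z)}

section EuclideanNorm

variable {ι : Type*} [Fintype ι]

lemma enorm2_eq_norm_toLp (v : ι → ℝ) : enorm2 v = ‖WithLp.toLp 2 v‖ := rfl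

lemma enorm2_nonneg (v : ι → ℝ) : 0 ≤ enorm2 v :=
  norm_nonneg _

lemma enorm2_sub_enorm2_le_enorm2_add (v w : ι → ℝ) :
    enorm2 v - enorm2 w ≤ enorm2 (v + w) := by
  simpa only [enorm2_eq_norm_toLp, WithLp.toLp_add, sub_neg_eq_add, norm_neg]
    using norm_sub_norm_le (WithLp.toLp 2 v) (-WithLp.toLp 2 w)

lemma abs_apply_le_enorm2 (v : ι → ℝ) (i : ι) : |v i| ≤ enorm2 v := by
  simpa only [enorm2_eq_norm_toLp, Real.norm_eq_abs]
    using PiLp.norm_apply_le (WithLp.toLp 2 v) i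

end EuclideanNorm

section ResidualNorm

variable {n m : ℕ} (Φ : Matrix (Fin n) (Fin m) ℝ) (y : Fin n → ℝ) {B : Finset (Fin m)}

lemma resNorm_le {z : Fin m → ℝ} (hz : ∀ l, z l ≠ 0 → l ∈ B) :
    resNorm Φ y B ≤ enorm2 (y - Φ *ᵥ z) :=
  csInf_le ⟨0, by rintro c ⟨w, -, rfl⟩; exact enorm2_nonneg _⟩ ⟨z, hz, rfl⟩

lemma le_resNorm {c : ℝ}
    (h : ∀ z : Fin m → ℝ, (∀ l, z l ≠ 0 → l ∈ B) → c ≤ enorm2 (y - Φ *ᵥ z)) :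
    c ≤ resNorm Φ y B :=
  le_csInf ⟨_, 0, by simp, rfl⟩ (by rintro c ⟨z, hz, rfl⟩; exact h z hz)

variable {x : Fin m → ℝ} (ε : Fin n → ℝ)

lemma resNorm_mulVec_add_le (hx : ∀ l, x l ≠ 0 → l ∈ B) :
    resNorm Φ (Φ *ᵥ x + ε) B ≤ enorm2 ε := by
  simpa using resNorm_le Φ (Φ *ᵥ x + ε) hx

lemma mul_abs_sub_le_resNorm_mulVec_add {σ : ℝ} (hσ : 0 ≤ σ)
    (hlow : ∀ v : Fin m → ℝ, σ * enorm2 v ≤ enorm2 (Φ *ᵥ v)) {i : Fin m}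
    (hi : i ∉ B) :
    σ * |x i| - enorm2 ε ≤ resNorm Φ (Φ *ᵥ x + ε) B := by
  refine le_resNorm Φ _ fun z hz => ?_
  have hzi : z i = 0 := by_contra fun h => hi (hz i h)
  have hcoord : |x i| ≤ enorm2 (x - z) := by
    simpa [hzi] using abs_apply_le_enorm2 (x - z) i
  have hres : Φ *ᵥ x + ε - Φ *ᵥ z = Φ *ᵥ (x - z) + ε := by
    rw [Matrix.mulVec_sub]; abel
  calc σ * |x i| - enorm2 ε
      ≤ enorm2 (Φ *ᵥ (x - z)) - enorm2 ε := by
        gcongr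
        exact (mul_le_mul_of_nonneg_left hcoord hσ).trans (hlow _)
    _ ≤ enorm2 (Φ *ᵥ x + ε - Φ *ᵥ z) := hres ▸ enorm2_sub_enorm2_le_enorm2_add _ _

end ResidualNorm

theorem backward_regression_single_step_guarantee_general {n m : ℕ}
    (Φ : Matrix (Fin n) (Fin m) ℝ)
    (σ : ℝ) (hσ : 0 < σ)
    (hlow : ∀ v : Fin m → ℝ, σ * enorm2 v ≤ enorm2 (Φ.mulVec v))
    (x : Fin m → ℝ) (ε : Fin n → ℝ) (y : Fin n → ℝ)
    (hy : y = Φ.mulVec x + ε)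
    (S : Finset (Fin m)) (hS : ∀ i, i ∈ S ↔ x i ≠ 0) (hne : S.Nonempty)
    (hnoise : σ / 2 * S.inf' hne (fun l => |x l|) > enorm2 ε) :
    ∀ A : Finset (Fin m), S ⊆ A →
      ∀ i ∈ S, ∀ j ∈ A \ S,
        resNorm Φ y (A.erase j) < resNorm Φ y (A.erase i) := by
  intro A hSA i hi j hj
  obtain ⟨-, hjS⟩ := Finset.mem_sdiff.mp hj
  subst hy
  have hkeep : ∀ l, x l ≠ 0 → l ∈ A.erase j := fun l hl =>
    have hlS := (hS l).mpr hl
    Finset.mem_erase.mpr ⟨fun h => hjS (h ▸ hlS), hSA hlS⟩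
  have hmin : σ * S.inf' hne (fun l => |x l|) ≤ σ * |x i| :=
    mul_le_mul_of_nonneg_left (Finset.inf'_le _ hi) hσ.le
  calc resNorm Φ (Φ *ᵥ x + ε) (A.erase j)
      ≤ enorm2 ε := resNorm_mulVec_add_le Φ ε hkeep
    _ < σ * |x i| - enorm2 ε := by linarith
    _ ≤ resNorm Φ (Φ *ᵥ x + ε) (A.erase i) :=
        mul_abs_sub_le_resNorm_mulVec_add Φ ε hσ.le hlow (Finset.notMem_erase i A)

/-- Theorem 2, Backward Regression single-step guarantee.
If `σ > 0` is a lower singular-value bound for the full-column-rank matrix `Φ`,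
`y = Φx + ε` with `(σ/2)·min_{i∈S}|x i| > ‖ε‖₂` where `S = supp x`, then for any
active set `A ⊇ S`, deleting any `j ∈ A \ S` yields a strictly smaller residual
than deleting any `i ∈ S`; hence Backward Regression never deletes an atom of `S`
while `S ⊊ A`, and recovers `S` in `m − |S|` steps. -/
theorem backward_regression_single_step_guarantee {n m : ℕ}
    (Φ : Matrix (Fin n) (Fin m) ℝ)
    (hΦ : Function.Injective Φ.mulVec)
    (σ : ℝ) (hσ : 0 < σ)
    (hlow : ∀ v : Fin m → ℝ, σ * enorm2 v ≤ enorm2 (Φ.mulVec v))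
    (x : Fin m → ℝ) (ε : Fin n → ℝ) (y : Fin n → ℝ)
    (hy : y = Φ.mulVec x + ε)
    (S : Finset (Fin m)) (hS : ∀ i, i ∈ S ↔ x i ≠ 0) (hne : S.Nonempty)
    (hnoise : σ / 2 * S.inf' hne (fun l => |x l|) > enorm2 ε) :
    ∀ A : Finset (Fin m), S ⊆ A →
      ∀ i ∈ S, ∀ j ∈ A \ S,
        resNorm Φ y (A.erase j) < resNorm Φ y (A.erase i) :=
  backward_regression_single_step_guarantee_general Φ σ hσ hlow x ε y hy S hS hne hnoise
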